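/- Let S be a 2-divisible abelian semigroup (for every x ∈ S there exists y ∈ S with y + y = x, and such y is unique, so x/2^k is defined for all k), B a Banach space, n a positive integer, φ : S^{n+1} → [0, ∞) satisfying Σ_{k=0}^∞ 2^{nk} φ(2^{-k-1} z) < ∞ for every z ∈ S^{n+1}, and let g : S^n → B be a symmetric function satisfying ‖D_n g(z)‖ ≤ φ(z) for all z ∈ S^{n+1}. Let Φ : S^n → [0, ∞) be any function such that Φ(y) ≥ R_n^- φ(y) and lim_{k→∞} 2^{nk} Φ(2^{-k} y) = 0 for all y ∈ S^n. Then the limit a(y) := lim_{k→∞} 2^{nk} g(2^{-k} y) exists for every y ∈ S^n, a : S^n → B is a symmetric n-additive function satisfying ‖g(y) − a(y)‖ ≤ Φ(y) for all y ∈ S^n, and a is the unique symmetric n-additive function with this property. -/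

import Mathlib

/-!
Write `n = m + 1`. Passing from `(2x₁, …, 2xₙ)` to `(xₙ, …, x₁)` by halving one doubled entry at a
time, each step is a single Cauchy difference of `g` (after permuting the variables, which `g`
ignores), evaluated exactly at the tuples in the definition of `r_n φ`; telescoping gives
`‖g(2x) - 2ⁿ g(x)‖ ≤ r_n φ(x)`. Hence consecutive terms of `2^{nk} g(2^{-k} y)` differ by at most
the terms of the series `R_n⁻ φ(y)`, so the sequence is Cauchy, its limit `a` is within `Φ` of `g`,
and `D_n a = 0` because `‖D_n‖` of the `k`-th term is at most `2^{nk} φ(2^{-k} z) → 0`.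
A symmetric `n`-additive `a'` satisfies `a'(2x) = 2ⁿ a'(x)` (the same estimate with `φ = 0`),
so `a'` equals its own rescalings and `‖2^{nk} g(2^{-k} y) - a'(y)‖ ≤ 2^{nk} Φ(2^{-k} y) → 0`.
-/

/-- The Cauchy difference operator `D_n` for a function of `n = m + 1` variables. -/
def Dop {S B : Type*} [AddCommSemigroup S] [AddCommGroup B] (m : ℕ)
    (g : (Fin (m + 1) → S) → B) (z : Fin (m + 2) → S) : B :=
  g (Function.update (fun i : Fin (m + 1) => z i.castSucc) (Fin.last m)
      (z (Fin.castSucc (Fin.last m)) + z (Fin.last (m + 1))))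
    - g (fun i : Fin (m + 1) => z i.castSucc)
    - g (Function.update (fun i : Fin (m + 1) => z i.castSucc) (Fin.last m)
      (z (Fin.last (m + 1))))

/-- The operator `r_n` for `n = m + 1`:
`r_n φ (x₁, …, x_n) = ∑_{j=1}^{n} 2^{j-1} φ(2x₁, …, 2x_{n-j}, x_n, x_{n-1}, …,
x_{n-j+1}, x_{n-j+1})` (indexed by `j = jj + 1`, tuples are `0`-indexed). -/
def rop {S : Type*} [AddCommSemigroup S] (m : ℕ)
    (φ : (Fin (m + 2) → S) → ℝ) (y : Fin (m + 1) → S) : ℝ :=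
  ∑ jj ∈ Finset.range (m + 1), 2 ^ jj *
    φ (fun i : Fin (m + 2) =>
      if h1 : (i : ℕ) < m - jj then y ⟨i, by omega⟩ + y ⟨i, by omega⟩
      else if h2 : m ≤ (i : ℕ) then y ⟨m - jj, by omega⟩
      else y ⟨2 * m - jj - i, by omega⟩)

open Finset Filter Topology

def IsSymmetricFn {S B : Type*} {n : ℕ} (f : (Fin n → S) → B) : Prop :=
  ∀ (x : Fin n → S) (σ : Equiv.Perm (Fin n)), f (x ∘ σ) = f x

def IsMultiAdditive {S B : Type*} [Add S] [Add B] {n : ℕ} (f : (Fin n → S) → B) : Prop :=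
  ∀ (x : Fin n → S) (i : Fin n) (u v : S),
    f (Function.update x i (u + v)) = f (Function.update x i u) + f (Function.update x i v)

section DoublingEstimate

variable {S : Type*} [AddCommSemigroup S]

theorem Fin.val_cycleIcc_last {m : ℕ} (i k : Fin (m + 1)) :
    (Fin.cycleIcc i (Fin.last m) k : ℕ) =
      if k < i then (k : ℕ) else if (k : ℕ) = m then (i : ℕ) else k + 1 := by
  rcases lt_or_ge k i with hki | hik
  · rw [Fin.cycleIcc_of_lt hki, if_pos hki]
  rw [if_neg (not_lt.2 hik)]
  rcases (Fin.le_last k).lt_or_eq with hk | rfl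
  · rw [Fin.cycleIcc_of_ge_of_lt hik hk, if_neg (Fin.val_lt_last hk.ne).ne,
      Fin.val_add_one_of_lt hk]
  · rw [Fin.cycleIcc_of_last hik, if_pos (Fin.val_last m)]

def ropArg (m : ℕ) (x : Fin (m + 1) → S) (j : ℕ) : Fin (m + 2) → S := fun i =>
  if h1 : (i : ℕ) < m - j then x ⟨i, by omega⟩ + x ⟨i, by omega⟩
  else if h2 : m ≤ (i : ℕ) then x ⟨m - j, by omega⟩
  else x ⟨2 * m - j - i, by omega⟩

/-- `(2x₀, …, 2x_{m-j}, x_m, x_{m-1}, …, x_{m+1-j})`. -/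
def partialDouble (m : ℕ) (x : Fin (m + 1) → S) (j : ℕ) : Fin (m + 1) → S := fun i =>
  if (i : ℕ) < m + 1 - j then x i + x i else x ⟨min m (2 * m + 1 - j - i), by omega⟩

theorem rop_eq_sum_ropArg (m : ℕ) (φ : (Fin (m + 2) → S) → ℝ) (x : Fin (m + 1) → S) :
    rop m φ x = ∑ j ∈ range (m + 1), 2 ^ j * φ (ropArg m x j) := rfl

theorem partialDouble_zero (m : ℕ) (x : Fin (m + 1) → S) :
    partialDouble m x 0 = fun i => x i + x i := by
  funext i
  exact if_pos (by omega)

theorem partialDouble_eq_comp_revPerm (m : ℕ) (x : Fin (m + 1) → S) :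
    partialDouble m x (m + 1) = x ∘ Fin.revPerm := by
  funext i
  refine (if_neg (by omega)).trans (congrArg x (Fin.ext ?_))
  simp only [Fin.revPerm_apply, Fin.val_rev]
  omega

theorem ropArg_castSucc (m : ℕ) (x : Fin (m + 1) → S) {j : ℕ} (hj : j ≤ m) :
    (fun i : Fin (m + 1) => ropArg m x j i.castSucc) = partialDouble m x (j + 1) := by
  funext i
  simp only [ropArg, partialDouble, Fin.val_castSucc]
  split_ifs <;> first | omega | (congr! 2 <;> omega)

theorem ropArg_castSucc_last (m : ℕ) (x : Fin (m + 1) → S) (j : ℕ) :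
    ropArg m x j (Fin.last m).castSucc = ropArg m x j (Fin.last (m + 1)) := by
  simp only [ropArg, Fin.val_castSucc, Fin.val_last]
  split_ifs <;> first | omega | rfl

theorem update_ropArg_eq_comp_cycleIcc (m : ℕ) (x : Fin (m + 1) → S) {j : ℕ} (hj : j ≤ m) :
    Function.update (fun i : Fin (m + 1) => ropArg m x j i.castSucc) (Fin.last m)
        (ropArg m x j (Fin.last m).castSucc + ropArg m x j (Fin.last (m + 1)))
      = partialDouble m x j ∘ Fin.cycleIcc ⟨m - j, by omega⟩ (Fin.last m) := by
  funext i
  have hval := Fin.val_cycleIcc_last ⟨m - j, by omega⟩ i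
  simp only [Function.update_apply, Function.comp_apply, ropArg, partialDouble,
    Fin.val_castSucc, Fin.ext_iff, Fin.val_last, Fin.lt_def] at hval ⊢
  split_ifs at hval ⊢ <;>
    first | omega | (congr! 2 <;> (try simp only [Fin.ext_iff] at *) <;> omega)

theorem Dop_ropArg {B : Type*} [AddCommGroup B] (m : ℕ) (g : (Fin (m + 1) → S) → B)
    (x : Fin (m + 1) → S) {j : ℕ} (hj : j ≤ m) :
    Dop m g (ropArg m x j) = g (partialDouble m x j ∘ Fin.cycleIcc ⟨m - j, by omega⟩ (Fin.last m))
      - g (partialDouble m x (j + 1)) - g (partialDouble m x (j + 1)) := by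
  rw [Dop, update_ropArg_eq_comp_cycleIcc m x hj, ← ropArg_castSucc_last,
    Function.update_eq_self, ropArg_castSucc m x hj]

theorem norm_sub_pow_smul_le_sum {E : Type*} [SeminormedAddCommGroup E] [NormedSpace ℝ E]
    {v : ℕ → E} {c : ℕ → ℝ} {r : ℝ} (hr : 0 ≤ r) {J : ℕ}
    (h : ∀ j < J, ‖v j - r • v (j + 1)‖ ≤ c j) :
    ‖v 0 - r ^ J • v J‖ ≤ ∑ j ∈ range J, r ^ j * c j := by
  induction J with
  | zero => simp
  | succ J ih =>
    calc ‖v 0 - r ^ (J + 1) • v (J + 1)‖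
        = ‖(v 0 - r ^ J • v J) + r ^ J • (v J - r • v (J + 1))‖ := by
          rw [smul_sub, smul_smul, ← pow_succ, sub_add_sub_cancel]
      _ ≤ ‖v 0 - r ^ J • v J‖ + r ^ J * ‖v J - r • v (J + 1)‖ :=
          (norm_add_le _ _).trans_eq (by rw [norm_smul, Real.norm_of_nonneg (pow_nonneg hr J)])
      _ ≤ ∑ j ∈ range (J + 1), r ^ j * c j := by
          rw [sum_range_succ]
          gcongr
          exacts [ih fun j hj => h j (by omega), h J J.lt_succ_self]

variable {B : Type*} [NormedAddCommGroup B] [NormedSpace ℝ B] {m : ℕ}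
  {φ : (Fin (m + 2) → S) → ℝ} {g : (Fin (m + 1) → S) → B}

theorem norm_sub_two_smul_partialDouble_le
    (hgsym : IsSymmetricFn g)
    (hgD : ∀ z, ‖Dop m g z‖ ≤ φ z) (x : Fin (m + 1) → S) {j : ℕ} (hj : j ≤ m) :
    ‖g (partialDouble m x j) - (2 : ℝ) • g (partialDouble m x (j + 1))‖ ≤ φ (ropArg m x j) := by
  have h := hgD (ropArg m x j)
  rwa [Dop_ropArg m g x hj, hgsym, sub_sub, ← two_smul ℝ] at h

theorem norm_map_double_sub_le_rop
    (hgsym : IsSymmetricFn g)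
    (hgD : ∀ z, ‖Dop m g z‖ ≤ φ z) (x : Fin (m + 1) → S) :
    ‖g (fun i => x i + x i) - (2 : ℝ) ^ (m + 1) • g x‖ ≤ rop m φ x := by
  have h := norm_sub_pow_smul_le_sum zero_le_two (v := fun j => g (partialDouble m x j))
    (J := m + 1) fun j hj => norm_sub_two_smul_partialDouble_le hgsym hgD x (by omega)
  rwa [partialDouble_zero, partialDouble_eq_comp_revPerm, hgsym] at h

end DoublingEstimate

section Additivity

variable {S B : Type*} [AddCommSemigroup S] [AddCommGroup B] {m : ℕ} {a : (Fin (m + 1) → S) → B}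

theorem Dop_eq_zero_of_isMultiAdditive (hadd : IsMultiAdditive a)
    (z : Fin (m + 2) → S) : Dop m a z = 0 := by
  rw [Dop, hadd, Function.update_eq_self, add_sub_cancel_left, sub_self]

theorem isMultiAdditive_of_Dop_eq_zero (hsym : IsSymmetricFn a) (hD : ∀ z, Dop m a z = 0) :
    IsMultiAdditive a := by
  intro x i u v
  set σ := Equiv.swap i (Fin.last m)
  have hmove (t : S) :
      a (Function.update x i t) = a (Function.update (x ∘ σ) (Fin.last m) t) := by
    rw [← hsym _ σ, Function.update_comp_equiv, Equiv.symm_swap, Equiv.swap_apply_left]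
  have hlast := hD (Fin.snoc (Function.update (x ∘ σ) (Fin.last m) u) v)
  simp only [Dop, Fin.snoc_castSucc, Fin.snoc_last, Function.update_idem,
    Function.update_self] at hlast
  rw [hmove, hmove, hmove]
  rwa [sub_sub, sub_eq_zero] at hlast

end Additivity

section Rescaling

variable {S B : Type*} [NormedAddCommGroup B] [NormedSpace ℝ B] {half : S → S} {m : ℕ}

def rescale (half : S → S) (m : ℕ) (g : (Fin (m + 1) → S) → B) (k : ℕ)
    (y : Fin (m + 1) → S) : B :=
  (2 : ℝ) ^ ((m + 1) * k) • g (fun i => half^[k] (y i))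

theorem rescale_zero (g : (Fin (m + 1) → S) → B) : rescale half m g 0 = g := by
  funext y
  simp [rescale]

theorem rescale_comp_perm {g : (Fin (m + 1) → S) → B}
    (hgsym : IsSymmetricFn g)
    (k : ℕ) (x : Fin (m + 1) → S) (σ : Equiv.Perm (Fin (m + 1))) :
    rescale half m g k (x ∘ σ) = rescale half m g k x :=
  congrArg ((2 : ℝ) ^ ((m + 1) * k) • ·) (hgsym (fun i => half^[k] (x i)) σ)

variable [AddCommSemigroup S] {a : (Fin (m + 1) → S) → B}

theorem map_double_of_isMultiAdditive
    (hsym : IsSymmetricFn a)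
    (hadd : IsMultiAdditive a)
    (x : Fin (m + 1) → S) : a (fun i => x i + x i) = (2 : ℝ) ^ (m + 1) • a x := by
  have h := norm_map_double_sub_le_rop (φ := 0) hsym
    (fun z => (norm_eq_zero.2 (Dop_eq_zero_of_isMultiAdditive hadd z)).le) x
  simpa [rop, sub_eq_zero] using h

theorem rescale_sub_rescale_succ (hhalf : ∀ x : S, half x + half x = x)
    (g : (Fin (m + 1) → S) → B) (k : ℕ) (y : Fin (m + 1) → S) :
    rescale half m g k y - rescale half m g (k + 1) y = (2 : ℝ) ^ ((m + 1) * k) •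
      (g (fun i => half^[k + 1] (y i) + half^[k + 1] (y i))
        - (2 : ℝ) ^ (m + 1) • g (fun i => half^[k + 1] (y i))) := by
  simp only [rescale, Function.iterate_succ_apply', hhalf, smul_sub, smul_smul, ← pow_add,
    mul_add, mul_one]

theorem norm_rescale_sub_rescale_succ_le (hhalf : ∀ x : S, half x + half x = x)
    {φ : (Fin (m + 2) → S) → ℝ} {g : (Fin (m + 1) → S) → B}
    (hgsym : IsSymmetricFn g)
    (hgD : ∀ z, ‖Dop m g z‖ ≤ φ z) (k : ℕ) (y : Fin (m + 1) → S) :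
    ‖rescale half m g k y - rescale half m g (k + 1) y‖
      ≤ (2 : ℝ) ^ ((m + 1) * k) * rop m φ (fun i => half^[k + 1] (y i)) := by
  rw [rescale_sub_rescale_succ hhalf, norm_smul, Real.norm_of_nonneg (by positivity)]
  gcongr
  exact norm_map_double_sub_le_rop hgsym hgD _

theorem rescale_eq_self (hhalf : ∀ x : S, half x + half x = x)
    (hsym : IsSymmetricFn a)
    (hadd : IsMultiAdditive a)
    (k : ℕ) : rescale half m a k = a := by
  induction k with
  | zero => exact rescale_zero a
  | succ k ih =>
    funext y
    have h := rescale_sub_rescale_succ hhalf a k y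
    rw [map_double_of_isMultiAdditive hsym hadd, sub_self, smul_zero, sub_eq_zero] at h
    rw [← h, ih]

theorem Dop_rescale (hhalf_add : ∀ u v : S, half (u + v) = half u + half v)
    (g : (Fin (m + 1) → S) → B) (k : ℕ) (z : Fin (m + 2) → S) :
    Dop m (rescale half m g k) z = (2 : ℝ) ^ ((m + 1) * k) • Dop m g (fun i => half^[k] (z i)) := by
  have hk : ∀ u v : S, half^[k] (u + v) = half^[k] u + half^[k] v :=
    iterate_map_add (AddHom.mk half hhalf_add) k
  simp only [Dop, rescale, smul_sub, Function.apply_update (fun _ => half^[k]), hk]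

end Rescaling

section Limits

variable {S B : Type*} [AddCommSemigroup S] [NormedAddCommGroup B] [NormedSpace ℝ B]
  {half : S → S} {m : ℕ}

theorem ropArg_map {f : S → S} (hf : ∀ u v : S, f (u + v) = f u + f v) (x : Fin (m + 1) → S)
    (j : ℕ) : ropArg m (fun i => f (x i)) j = fun i => f (ropArg m x j i) := by
  funext i
  unfold ropArg
  split_ifs
  · exact (hf _ _).symm
  · rfl
  · rfl

theorem summable_rop_iterate (hhalf_add : ∀ u v : S, half (u + v) = half u + half v)
    {φ : (Fin (m + 2) → S) → ℝ}
    (hφsum : ∀ z : Fin (m + 2) → S,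
      Summable fun k : ℕ => (2 : ℝ) ^ ((m + 1) * k) * φ (fun i => half^[k + 1] (z i)))
    (y : Fin (m + 1) → S) :
    Summable fun k : ℕ => (2 : ℝ) ^ ((m + 1) * k) * rop m φ (fun i => half^[k + 1] (y i)) := by
  have hk (k : ℕ) : ∀ u v : S, half^[k] (u + v) = half^[k] u + half^[k] v :=
    iterate_map_add (AddHom.mk half hhalf_add) k
  simp only [rop_eq_sum_ropArg, ropArg_map (hk _), mul_sum]
  refine summable_sum fun j _ => ?_
  simpa only [mul_left_comm] using (hφsum (ropArg m y j)).mul_left (2 ^ j)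

theorem tendsto_pow_mul_iterate_half {ι : Type*} (hhalfuniq : ∀ x u : S, u + u = x → u = half x)
    (n : ℕ) {φ : (ι → S) → ℝ}
    (hφsum : ∀ z : ι → S,
      Summable fun k : ℕ => (2 : ℝ) ^ (n * k) * φ (fun i => half^[k + 1] (z i)))
    (z : ι → S) :
    Tendsto (fun k : ℕ => (2 : ℝ) ^ (n * k) * φ (fun i => half^[k] (z i))) atTop (𝓝 0) := by
  have hdouble : ∀ k : ℕ, (fun i => half^[k + 1] (z i + z i)) = fun i => half^[k] (z i) :=
    fun k => funext fun i => by rw [Function.iterate_succ_apply, ← hhalfuniq _ _ rfl]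
  simpa only [hdouble] using (hφsum fun i => z i + z i).tendsto_atTop_zero

theorem Dop_eq_zero_of_tendsto_rescale (hhalf_add : ∀ u v : S, half (u + v) = half u + half v)
    {φ : (Fin (m + 2) → S) → ℝ} {g a : (Fin (m + 1) → S) → B} (hgD : ∀ z, ‖Dop m g z‖ ≤ φ z)
    (ha : ∀ y, Tendsto (fun k => rescale half m g k y) atTop (𝓝 (a y))) (z : Fin (m + 2) → S)
    (hz : Tendsto (fun k : ℕ => (2 : ℝ) ^ ((m + 1) * k) * φ (fun i => half^[k] (z i)))
      atTop (𝓝 0)) :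
    Dop m a z = 0 := by
  have hlim : Tendsto (fun k => Dop m (rescale half m g k) z) atTop (𝓝 (Dop m a z)) :=
    ((ha _).sub (ha _)).sub (ha _)
  refine tendsto_nhds_unique hlim (squeeze_zero_norm (fun k => ?_) hz)
  rw [Dop_rescale hhalf_add, norm_smul, Real.norm_of_nonneg (by positivity)]
  gcongr
  exact hgD _

theorem tendsto_rescale_of_norm_sub_le (hhalf : ∀ x : S, half x + half x = x)
    {g a : (Fin (m + 1) → S) → B} {Φ : (Fin (m + 1) → S) → ℝ}
    (hsym : IsSymmetricFn a) (hadd : IsMultiAdditive a) (hle : ∀ y, ‖g y - a y‖ ≤ Φ y)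
    (y : Fin (m + 1) → S)
    (hΦ : Tendsto (fun k : ℕ => (2 : ℝ) ^ ((m + 1) * k) * Φ (fun i => half^[k] (y i)))
      atTop (𝓝 0)) :
    Tendsto (fun k => rescale half m g k y) atTop (𝓝 (a y)) := by
  rw [tendsto_iff_norm_sub_tendsto_zero]
  refine squeeze_zero (fun _ => norm_nonneg _) (fun k => ?_) hΦ
  rw [← congrFun (rescale_eq_self hhalf hsym hadd k) y, rescale, rescale, ← smul_sub, norm_smul,
    Real.norm_of_nonneg (by positivity)]
  gcongr
  exact hle _

end Limits

theorem stmt5_general {S B : Type*} [AddCommSemigroup S] [NormedAddCommGroup B]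
    [NormedSpace ℝ B] [CompleteSpace B]
    (half : S → S) (hhalf : ∀ x : S, half x + half x = x)
    (hhalfuniq : ∀ x u : S, u + u = x → u = half x)
    (m : ℕ) (φ : (Fin (m + 2) → S) → ℝ)
    (hφsum : ∀ z : Fin (m + 2) → S,
      Summable fun k : ℕ =>
        (2 : ℝ) ^ ((m + 1) * k) * φ (fun i => half^[k + 1] (z i)))
    (g : (Fin (m + 1) → S) → B)
    (hgsym : ∀ (x : Fin (m + 1) → S) (σ : Equiv.Perm (Fin (m + 1))), g (x ∘ σ) = g x)
    (hgD : ∀ z, ‖Dop m g z‖ ≤ φ z)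
    (Φ : (Fin (m + 1) → S) → ℝ)
    (hΦR : ∀ y : Fin (m + 1) → S,
      (∑' k : ℕ, (2 : ℝ) ^ ((m + 1) * k) * rop m φ (fun i => half^[k + 1] (y i))) ≤ Φ y)
    (hΦlim : ∀ y : Fin (m + 1) → S,
      Filter.Tendsto (fun k : ℕ => (2 : ℝ) ^ ((m + 1) * k) * Φ (fun i => half^[k] (y i)))
        Filter.atTop (nhds 0)) :
    ∃ a : (Fin (m + 1) → S) → B,
      (∀ y : Fin (m + 1) → S,
        Filter.Tendsto
          (fun k : ℕ => ((2 : ℝ) ^ ((m + 1) * k)) • g (fun i => half^[k] (y i)))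
          Filter.atTop (nhds (a y))) ∧
      (∀ (x : Fin (m + 1) → S) (σ : Equiv.Perm (Fin (m + 1))), a (x ∘ σ) = a x) ∧
      (∀ (x : Fin (m + 1) → S) (i : Fin (m + 1)) (u v : S),
        a (Function.update x i (u + v)) = a (Function.update x i u) + a (Function.update x i v)) ∧
      (∀ y, ‖g y - a y‖ ≤ Φ y) ∧
      (∀ a' : (Fin (m + 1) → S) → B,
        (∀ (x : Fin (m + 1) → S) (σ : Equiv.Perm (Fin (m + 1))), a' (x ∘ σ) = a' x) →
        (∀ (x : Fin (m + 1) → S) (i : Fin (m + 1)) (u v : S),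
          a' (Function.update x i (u + v))
            = a' (Function.update x i u) + a' (Function.update x i v)) →
        (∀ y, ‖g y - a' y‖ ≤ Φ y) → a' = a) := by
  have hhalf_add : ∀ u v : S, half (u + v) = half u + half v := fun u v =>
    (hhalfuniq _ _ (by rw [add_add_add_comm, hhalf, hhalf])).symm
  have hstep : ∀ y k, dist (rescale half m g k y) (rescale half m g (k + 1) y)
      ≤ (2 : ℝ) ^ ((m + 1) * k) * rop m φ (fun i => half^[k + 1] (y i)) := fun y k =>
    (dist_eq_norm _ _).trans_le (norm_rescale_sub_rescale_succ_le hhalf hgsym hgD k y)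
  have hsummable := summable_rop_iterate hhalf_add hφsum
  choose a ha using fun y =>
    cauchySeq_tendsto_of_complete (cauchySeq_of_dist_le_of_summable _ (hstep y) (hsummable y))
  have hsym : IsSymmetricFn a := fun x σ =>
    tendsto_nhds_unique ((ha (x ∘ σ)).congr fun k => rescale_comp_perm hgsym k x σ) (ha x)
  have hDa : ∀ z, Dop m a z = 0 := fun z => Dop_eq_zero_of_tendsto_rescale hhalf_add hgD ha z
    (tendsto_pow_mul_iterate_half hhalfuniq _ hφsum z)
  refine ⟨a, ha, hsym, isMultiAdditive_of_Dop_eq_zero hsym hDa, fun y => ?_,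
    fun a' hsym' hadd' hle => funext fun y =>
      tendsto_nhds_unique (tendsto_rescale_of_norm_sub_le hhalf hsym' hadd' hle y (hΦlim y)) (ha y)⟩
  have hdist := dist_le_tsum_of_dist_le_of_tendsto₀ _ (hstep y) (hsummable y) (ha y)
  rw [rescale_zero, dist_eq_norm] at hdist
  exact hdist.trans (hΦR y)

/-- **Theorem 2.2 (2).** Let `S` be a uniquely `2`-divisible abelian semigroup (with halving
map `half`), `B` a Banach space, `n = m + 1 ≥ 1`, `φ : Sⁿ⁺¹ → [0,∞)` with
`∑ₖ 2^{nk} φ(2^{-k-1} z) < ∞`, and `g : Sⁿ → B` symmetric with `‖D_n g z‖ ≤ φ z`.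
If `Φ : Sⁿ → [0,∞)` satisfies `Φ y ≥ R_n⁻ φ y` and `2^{nk} Φ(2^{-k} y) → 0`, then
`a y := lim 2^{nk} g(2^{-k} y)` exists, is symmetric and `n`-additive, satisfies
`‖g y - a y‖ ≤ Φ y`, and is the unique such symmetric `n`-additive map.
(Here `2^{-k} x = half^[k] x`.) -/
theorem stmt5 {S B : Type*} [AddCommSemigroup S] [NormedAddCommGroup B]
    [NormedSpace ℝ B] [CompleteSpace B]
    (half : S → S) (hhalf : ∀ x : S, half x + half x = x)
    (hhalfuniq : ∀ x u : S, u + u = x → u = half x)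
    (m : ℕ) (φ : (Fin (m + 2) → S) → ℝ) (hφ0 : ∀ z, 0 ≤ φ z)
    (hφsum : ∀ z : Fin (m + 2) → S,
      Summable fun k : ℕ =>
        (2 : ℝ) ^ ((m + 1) * k) * φ (fun i => half^[k + 1] (z i)))
    (g : (Fin (m + 1) → S) → B)
    (hgsym : ∀ (x : Fin (m + 1) → S) (σ : Equiv.Perm (Fin (m + 1))), g (x ∘ σ) = g x)
    (hgD : ∀ z, ‖Dop m g z‖ ≤ φ z)
    (Φ : (Fin (m + 1) → S) → ℝ) (hΦ0 : ∀ y, 0 ≤ Φ y)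
    (hΦR : ∀ y : Fin (m + 1) → S,
      (∑' k : ℕ, (2 : ℝ) ^ ((m + 1) * k) * rop m φ (fun i => half^[k + 1] (y i))) ≤ Φ y)
    (hΦlim : ∀ y : Fin (m + 1) → S,
      Filter.Tendsto (fun k : ℕ => (2 : ℝ) ^ ((m + 1) * k) * Φ (fun i => half^[k] (y i)))
        Filter.atTop (nhds 0)) :
    ∃ a : (Fin (m + 1) → S) → B,
      (∀ y : Fin (m + 1) → S,
        Filter.Tendsto
          (fun k : ℕ => ((2 : ℝ) ^ ((m + 1) * k)) • g (fun i => half^[k] (y i)))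
          Filter.atTop (nhds (a y))) ∧
      (∀ (x : Fin (m + 1) → S) (σ : Equiv.Perm (Fin (m + 1))), a (x ∘ σ) = a x) ∧
      (∀ (x : Fin (m + 1) → S) (i : Fin (m + 1)) (u v : S),
        a (Function.update x i (u + v)) = a (Function.update x i u) + a (Function.update x i v)) ∧
      (∀ y, ‖g y - a y‖ ≤ Φ y) ∧
      (∀ a' : (Fin (m + 1) → S) → B,
        (∀ (x : Fin (m + 1) → S) (σ : Equiv.Perm (Fin (m + 1))), a' (x ∘ σ) = a' x) →
        (∀ (x : Fin (m + 1) → S) (i : Fin (m + 1)) (u v : S),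
          a' (Function.update x i (u + v))
            = a' (Function.update x i u) + a' (Function.update x i v)) →
        (∀ y, ‖g y - a' y‖ ≤ Φ y) → a' = a) :=
  stmt5_general half hhalf hhalfuniq m φ hφsum g hgsym hgD Φ hΦR hΦlim
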